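/- For any distance space X and any non-expanding map f : EX → EX from the injective envelope of X to itself satisfying f ∘ e_X = e_X (where e_X : X → EX is the canonical isometry x ↦ d_X(x,·)), the map f is the identity map of EX. -/

import Mathlib

open scoped ENNReal

structure DistSpace (X : Type*) where
  d : X → X → ℝ≥0∞
  refl : ∀ x, d x x = 0
  symm : ∀ x y, d x y = d y x
  triangle : ∀ x y z, d x z ≤ d x y + d y z

def Delta {X : Type*} (D : DistSpace X) : Set (X → ℝ≥0∞) :=
  {f | ∀ x y, D.d x y ≤ f x + f y}

def Extremal {X : Type*} (D : DistSpace X) (f : X → ℝ≥0∞) : Prop :=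
  f ∈ Delta D ∧ ∀ g ∈ Delta D, g ≤ f → g = f

noncomputable def supDist {X : Type*} (f g : X → ℝ≥0∞) : ℝ≥0∞ :=
  ⨆ x, (f x - g x) ⊔ (g x - f x)

/-
An extremal function `h` is `1`-Lipschitz in the sense `h z ≤ h x + d(x, z)`: otherwise
lowering `h z` to `h x + d(x, z)` would stay in `ΔX`. Consequently the sup-distance from `h` to
`e_X x` is exactly `h x`. If `F` is non-expanding and fixes every `e_X x`, then
`F f x = d(F f, e_X x) ≤ d(f, e_X x) = f x`, so `F f ≤ f`, and minimality of `f` forces `F f = f`.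
-/

namespace DistSpace

variable {X : Type*} (D : DistSpace X)

lemma update_mem_Delta [DecidableEq X] {f : X → ℝ≥0∞} (hf : f ∈ Delta D) (z : X) {v : ℝ≥0∞}
    (hv : ∀ b, D.d z b ≤ v + f b) : Function.update f z v ∈ Delta D := by
  intro a b
  rcases eq_or_ne a z with rfl | ha <;> rcases eq_or_ne b a with rfl | hb
  · simp [D.refl]
  · simpa [Function.update_of_ne hb] using hv b
  · simp [D.refl]
  · rcases eq_or_ne b z with rfl | hbz
    · simpa [Function.update_of_ne ha, D.symm a b, add_comm] using hv a
    · simpa [Function.update_of_ne ha, Function.update_of_ne hbz] using hf a b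

lemma extremal_dist (x : X) : Extremal D (D.d x) := by
  refine ⟨fun a b => ?_, fun g hg hle => ?_⟩
  · simpa [D.symm a x] using D.triangle a x b
  · have hgx : g x = 0 := le_antisymm (by simpa [D.refl] using hle x) bot_le
    funext y
    exact le_antisymm (hle y) (by simpa [hgx] using hg x y)

end DistSpace

namespace Extremal

variable {X : Type*} {D : DistSpace X} {h : X → ℝ≥0∞}

lemma le_add_dist (hh : Extremal D h) (x z : X) : h z ≤ h x + D.d x z := by
  classical
  have hv : ∀ b, D.d z b ≤ min (h z) (h x + D.d x z) + h b := fun b => by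
    rw [← min_add_add_right]
    refine le_min (hh.1 z b) ?_
    calc D.d z b ≤ D.d z x + D.d x b := D.triangle z x b
      _ ≤ D.d x z + (h x + h b) := by rw [D.symm z x]; gcongr; exact hh.1 x b
      _ = h x + D.d x z + h b := by ring
  have hle : Function.update h z (min (h z) (h x + D.d x z)) ≤ h := by
    intro y
    rcases eq_or_ne y z with rfl | hy
    · simp
    · simp [Function.update_of_ne hy]
  have hupd := hh.2 _ (D.update_mem_Delta hh.1 z hv) hle
  calc h z = min (h z) (h x + D.d x z) :=
      (congrFun hupd z).symm.trans (Function.update_self ..)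
    _ ≤ h x + D.d x z := min_le_right _ _

lemma supDist_dist (hh : Extremal D h) (x : X) : supDist h (D.d x) = h x := by
  refine le_antisymm (iSup_le fun z => max_le ?_ ?_) ?_
  · exact tsub_le_iff_right.2 (hh.le_add_dist x z)
  · exact tsub_le_iff_right.2 (by simpa [D.symm x z, add_comm] using hh.1 z x)
  · calc h x = (h x - D.d x x) ⊔ (D.d x x - h x) := by simp [D.refl]
      _ ≤ supDist h (D.d x) := le_iSup (fun z => (h z - D.d x z) ⊔ (D.d x z - h z)) x

end Extremal

/-- If `F` maps the injective envelope `EX` (the extremal functions, with the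
sup-distance) to itself in a non-expanding way and `F ∘ e_X = e_X` for the
canonical isometry `e_X : x ↦ d_X(x,·)`, then `F` is the identity on `EX`. -/
theorem stmt5 {X : Type*} (D : DistSpace X)
    (F : (X → ℝ≥0∞) → (X → ℝ≥0∞))
    (hmap : ∀ f, Extremal D f → Extremal D (F f))
    (hne : ∀ f g, Extremal D f → Extremal D g → supDist (F f) (F g) ≤ supDist f g)
    (hfix : ∀ x, F (fun z => D.d x z) = fun z => D.d x z) :
    ∀ f, Extremal D f → F f = f := by
  intro f hf
  have hFf := hmap f hf
  have hle : F f ≤ f := fun x => by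
    have hx := hne f (D.d x) hf (D.extremal_dist x)
    rwa [hfix x, hFf.supDist_dist x, hf.supDist_dist x] at hx
  exact hf.2 (F f) hFf.1 hle
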